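/- arXiv:1802.10469 — 6 statements merged into one kernel-verified Lean document; each statement's English description precedes it below -/
import Mathlib

section
/- Suppose d1, d2, l > 0, A0, B0 ∈ ℝ with A0 + B0 < 0, and r > 0 satisfies r > A0 and r > r_n^T for every n ∈ ℕ. Then for every n ∈ ℕ, every complex root λ of G_n(λ, r, 0) = 0 (that is, of the quadratic λ^2 − [A0 − (d1 + d2)*x_n − r]*λ + d2*x_n*(d1*x_n − A0) + r*(d1*x_n − A0 − B0) = 0) has strictly negative real part. -/
/-- If `d1, d2, l > 0`, `A0 + B0 < 0`, `r > 0`, `r > A0` and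
`r > r_n^T` for every `n`, then for every `n` every complex root `λ` of
`G_n(λ, r, 0) = 0` has strictly negative real part. -/
theorem holling_tanner_stability_tau_zero
    (d1 d2 l A0 B0 r : ℝ) (hd1 : 0 < d1) (hd2 : 0 < d2) (hl : 0 < l)
    (hAB : A0 + B0 < 0) (hr : 0 < r) (hrA : A0 < r)
    (hrT : ∀ n : ℕ,
      -(d2 * ((n:ℝ)^2 / l^2) * (d1 * ((n:ℝ)^2 / l^2) - A0)) /
        (d1 * ((n:ℝ)^2 / l^2) - A0 - B0) < r) :
    ∀ n : ℕ, ∀ lam : ℂ,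
      lam^2 - (((A0 - (d1 + d2) * ((n:ℝ)^2 / l^2) - r : ℝ)) : ℂ) * lam
        + (((d2 * ((n:ℝ)^2 / l^2) * (d1 * ((n:ℝ)^2 / l^2) - A0) : ℝ)) : ℂ)
        + (((r * (d1 * ((n:ℝ)^2 / l^2) - A0 - B0) : ℝ)) : ℂ) = 0 →
      lam.re < 0 := by
  intro n lam h
  set x : ℝ := (n:ℝ)^2 / l^2 with hxdef
  have hx : 0 ≤ x := div_nonneg (sq_nonneg _) (sq_nonneg _)
  -- positive "b" coefficient
  have hb : 0 < r + (d1 + d2) * x - A0 := by nlinarith [mul_nonneg (le_of_lt (add_pos hd1 hd2)) hx]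
  -- denominator positivity
  have hD : 0 < d1 * x - A0 - B0 := by nlinarith [mul_nonneg hd1.le hx]
  -- positive constant term
  have hc : 0 < d2 * x * (d1 * x - A0) + r * (d1 * x - A0 - B0) := by
    have := hrT n
    rw [div_lt_iff₀ hD] at this
    nlinarith
  set u := lam.re
  set v := lam.im
  have hre := congrArg Complex.re h
  have him := congrArg Complex.im h
  simp [pow_two, Complex.mul_re, Complex.mul_im, Complex.add_re, Complex.add_im,
    Complex.sub_re, Complex.sub_im] at hre him
  -- him : imaginary part equation
  by_contra hcon
  push_neg at hcon
  have hv : v * (2 * u - (A0 - (d1 + d2) * x - r)) = 0 := by ring_nf; ring_nf at him; linarith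
  have hcon' : (0:ℝ) ≤ lam.re := hcon
  rcases mul_eq_zero.1 hv with hv0 | hu0
  · -- v = 0, real root case
    have hv0' : lam.im = 0 := hv0
    rw [hv0'] at hre
    nlinarith [sq_nonneg lam.re]
  · -- 2u = A0 - (d1+d2)x - r, so u < 0, contradicting u ≥ 0
    have hu0' : 2 * lam.re - (A0 - (d1 + d2) * x - r) = 0 := hu0
    nlinarith
end

section
/- Suppose d1, d2, l > 0, A0, B0 ∈ ℝ with A0 + B0 < 0, n ∈ ℕ, and 0 < r < r_n^T. Then the quadratic G_n(λ, r, 0) = λ^2 − [A0 − (d1 + d2)*x_n − r]*λ + d2*x_n*(d1*x_n − A0) + r*(d1*x_n − A0 − B0) has a real root λ > 0; in particular the constant steady state is linearly unstable for r < r_n^T. -/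
/-- If `d1, d2, l > 0`, `A0 + B0 < 0`, `n ∈ ℕ` and `0 < r < r_n^T`,
then the quadratic `G_n(λ, r, 0)` has a real root `λ > 0`; in particular the
constant steady state is linearly unstable for `r < r_n^T`. -/
theorem holling_tanner_instability_below_turing
    (d1 d2 l A0 B0 r : ℝ) (n : ℕ) (hd1 : 0 < d1) (hd2 : 0 < d2) (hl : 0 < l)
    (hAB : A0 + B0 < 0) (hr : 0 < r)
    (hrT : r < -(d2 * ((n:ℝ)^2 / l^2) * (d1 * ((n:ℝ)^2 / l^2) - A0)) /
        (d1 * ((n:ℝ)^2 / l^2) - A0 - B0)) :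
    ∃ lam : ℝ, 0 < lam ∧
      lam^2 - (A0 - (d1 + d2) * ((n:ℝ)^2 / l^2) - r) * lam
        + d2 * ((n:ℝ)^2 / l^2) * (d1 * ((n:ℝ)^2 / l^2) - A0)
        + r * (d1 * ((n:ℝ)^2 / l^2) - A0 - B0) = 0 := by
  set x : ℝ := (n:ℝ)^2 / l^2 with hx
  have hx0 : 0 ≤ x := by positivity
  have hD : 0 < d1 * x - A0 - B0 := by nlinarith [mul_nonneg hd1.le hx0]
  have hc : d2 * x * (d1 * x - A0) + r * (d1 * x - A0 - B0) < 0 := by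
    rw [lt_div_iff₀ hD] at hrT
    nlinarith
  set B : ℝ := A0 - (d1 + d2) * x - r with hB
  set c : ℝ := d2 * x * (d1 * x - A0) + r * (d1 * x - A0 - B0) with hcdef
  have hdisc : (0:ℝ) ≤ B^2 - 4*c := by nlinarith [sq_nonneg B]
  set s : ℝ := Real.sqrt (B^2 - 4*c) with hs
  have hs2 : s^2 = B^2 - 4*c := Real.sq_sqrt hdisc
  have hsB : -B < s := by
    have h1 : |B| < s := by
      have : Real.sqrt (B^2) < s := by
        apply Real.sqrt_lt_sqrt (sq_nonneg B)
        linarith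
      rwa [Real.sqrt_sq_eq_abs] at this
    calc -B ≤ |B| := neg_le_abs B
    _ < s := h1
  refine ⟨(B + s)/2, by linarith, ?_⟩
  have : ((B + s)/2)^2 - B * ((B + s)/2) + c = 0 := by linear_combination hs2 / 4
  linarith [this]
end

section
/- Suppose d1, d2, l > 0, A0, B0 ∈ ℝ with A0 + B0 < 0, n ∈ ℕ with n ≥ 1, and r_n^T > A0. Then λ = 0 is a simple root of the quadratic G_n(·, r_n^T, 0): its constant term d2*x_n*(d1*x_n − A0) + r_n^T*(d1*x_n − A0 − B0) vanishes while its linear coefficient satisfies ∂G_n/∂λ(0, r_n^T, 0) = r_n^T + (d1 + d2)*x_n − A0 > 0; moreover the derivative in r of the constant term, ∂/∂r[G_n(0, r, 0)] = d1*x_n − A0 − B0, is strictly positive (the transversality condition for the Turing bifurcation at τ = 0). -/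
theorem hasDerivAt_sq_sub_mul_add {𝕜 : Type*} [NontriviallyNormedField 𝕜] (b c z : 𝕜) :
    HasDerivAt (fun w => w ^ 2 - b * w + c) (2 * z - b) z := by
  simpa using ((hasDerivAt_pow 2 z).sub ((hasDerivAt_id z).const_mul b)).add_const c

theorem holling_tanner_turing_simple_zero_general
    (d1 d2 l A0 B0 : ℝ) (n : ℕ) (hd1 : 0 < d1) (hd2 : 0 < d2)
    (hAB : A0 + B0 < 0)
    (xn : ℝ) (hxn : xn = (n:ℝ)^2 / l^2)
    (rT : ℝ) (hrT : rT = -(d2 * xn * (d1 * xn - A0)) / (d1 * xn - A0 - B0))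
    (hrTA : A0 < rT)
    (G : ℂ → ℂ)
    (hG : G = fun lam => lam^2 - (((A0 - (d1 + d2) * xn - rT : ℝ)) : ℂ) * lam
        + (((d2 * xn * (d1 * xn - A0) + rT * (d1 * xn - A0 - B0) : ℝ)) : ℂ)) :
    (d2 * xn * (d1 * xn - A0) + rT * (d1 * xn - A0 - B0) = 0) ∧
    G 0 = 0 ∧
    deriv G 0 = (((rT + (d1 + d2) * xn - A0 : ℝ)) : ℂ) ∧
    0 < rT + (d1 + d2) * xn - A0 ∧
    deriv (fun r : ℝ => d2 * xn * (d1 * xn - A0) + r * (d1 * xn - A0 - B0)) rT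
      = d1 * xn - A0 - B0 ∧
    0 < d1 * xn - A0 - B0 := by
  have hxn_nonneg : 0 ≤ xn := hxn ▸ by positivity
  have hslope : 0 < d1 * xn - A0 - B0 := by linarith [mul_nonneg hd1.le hxn_nonneg]
  have hconst : d2 * xn * (d1 * xn - A0) + rT * (d1 * xn - A0 - B0) = 0 := by
    rw [hrT, div_mul_cancel₀ _ hslope.ne']
    ring
  refine ⟨hconst, by simp [hG, hconst], ?_, ?_, by simp, hslope⟩
  · rw [hG, (hasDerivAt_sq_sub_mul_add _ _ 0).deriv]
    push_cast
    ring
  · linarith [mul_nonneg (add_pos hd1 hd2).le hxn_nonneg]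

/-- If `d1, d2, l > 0`, `A0 + B0 < 0`, `n ≥ 1` and `r_n^T > A0`, then
`λ = 0` is a simple root of the quadratic `G_n(·, r_n^T, 0)`: the constant term
vanishes, the linear coefficient `∂G_n/∂λ(0, r_n^T, 0) = r_n^T + (d1+d2)x_n − A0`
is positive, and `∂/∂r[G_n(0, r, 0)] = d1*x_n − A0 − B0 > 0` (transversality). -/
theorem holling_tanner_turing_simple_zero
    (d1 d2 l A0 B0 : ℝ) (n : ℕ) (hd1 : 0 < d1) (hd2 : 0 < d2) (hl : 0 < l)
    (hAB : A0 + B0 < 0) (hn : 1 ≤ n)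
    (xn : ℝ) (hxn : xn = (n:ℝ)^2 / l^2)
    (rT : ℝ) (hrT : rT = -(d2 * xn * (d1 * xn - A0)) / (d1 * xn - A0 - B0))
    (hrTA : A0 < rT)
    (G : ℂ → ℂ)
    (hG : G = fun lam => lam^2 - (((A0 - (d1 + d2) * xn - rT : ℝ)) : ℂ) * lam
        + (((d2 * xn * (d1 * xn - A0) + rT * (d1 * xn - A0 - B0) : ℝ)) : ℂ)) :
    (d2 * xn * (d1 * xn - A0) + rT * (d1 * xn - A0 - B0) = 0) ∧
    G 0 = 0 ∧
    deriv G 0 = (((rT + (d1 + d2) * xn - A0 : ℝ)) : ℂ) ∧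
    0 < rT + (d1 + d2) * xn - A0 ∧
    deriv (fun r : ℝ => d2 * xn * (d1 * xn - A0) + r * (d1 * xn - A0 - B0)) rT
      = d1 * xn - A0 - B0 ∧
    0 < d1 * xn - A0 - B0 :=
  holling_tanner_turing_simple_zero_general d1 d2 l A0 B0 n hd1 hd2 hAB xn hxn rT hrT hrTA G hG
end

section
/- Suppose d1, d2, l > 0, A0, B0 ∈ ℝ with A0 + B0 < 0, n ∈ ℕ, and r = r_n^T > 0. Then for every τ ≥ 0, λ = 0 is a root of G_n(·, r, τ), and the derivative in λ satisfies ∂G_n/∂λ(0, r, τ) = [r + (d1 + d2)*x_n − A0] − r*τ*(d1*x_n − A0 − B0); consequently, setting τ0 = [r + (d1 + d2)*x_n − A0]/[r*(d1*x_n − A0 − B0)], the root λ = 0 is simple (∂G_n/∂λ(0, r, τ) ≠ 0) if and only if τ ≠ τ0. -/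
/-!
At `λ = 0` the exponential factor is `1`, so `G_n(0, r, τ) = d2 x_n (d1 x_n − A0) + r (d1 x_n − A0 − B0)`,
which vanishes exactly because `r` is the Turing value `r_n^T`. Differentiating the quasi-polynomial
at `0` gives the affine function `[r + (d1 + d2) x_n − A0] − r τ (d1 x_n − A0 − B0)` of `τ`, whose
slope is nonzero since `r > 0` forces `d1 x_n − A0 − B0 ≠ 0`; its only zero is `τ0`.
-/

open Complex

noncomputable def delayedCharFun (a b r q τ z : ℂ) : ℂ :=
  z ^ 2 - (a - r * exp (-z * τ)) * z + b + r * exp (-z * τ) * q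

section

variable (a b r q τ : ℂ)

theorem delayedCharFun_zero : delayedCharFun a b r q τ 0 = b + r * q := by
  simp [delayedCharFun]

theorem hasDerivAt_delayedCharFun_zero :
    HasDerivAt (delayedCharFun a b r q τ) (r - a - r * τ * q) 0 := by
  have hexp : HasDerivAt (fun z : ℂ => exp (-z * τ)) (-τ) 0 := by
    simpa using ((hasDerivAt_id (0 : ℂ)).neg.mul_const τ).cexp
  exact ((((hasDerivAt_pow 2 (0 : ℂ)).sub
    (((hasDerivAt_const (0 : ℂ) a).sub (hexp.const_mul r)).mul (hasDerivAt_id 0))).add_const b).add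
    ((hexp.const_mul r).mul_const q)).congr_deriv
      (by simp only [Pi.sub_apply, id_eq, neg_zero, zero_mul, exp_zero]; ring)

end

section

variable {K : Type*} [Field K]

theorem ne_zero_and_add_mul_eq_zero_of_eq_neg_div {p q r : K} (hr : r = -p / q) (hr0 : r ≠ 0) :
    q ≠ 0 ∧ p + r * q = 0 := by
  have hq : q ≠ 0 := (div_ne_zero_iff.mp (hr ▸ hr0)).2
  refine ⟨hq, ?_⟩
  rw [hr, div_mul_cancel₀ _ hq]
  ring

theorem sub_mul_ne_zero_iff_ne_div {c r q τ : K} (hrq : r * q ≠ 0) :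
    c - r * τ * q ≠ 0 ↔ τ ≠ c / (r * q) := by
  rw [ne_eq, ne_eq, not_iff_not, eq_div_iff hrq, sub_eq_zero]
  constructor <;> intro h <;> linear_combination -h

end

theorem holling_tanner_zero_root_simple_iff_general
    (d1 d2 A0 B0 r : ℝ)
    (xn : ℝ)
    (hr : r = -(d2 * xn * (d1 * xn - A0)) / (d1 * xn - A0 - B0)) (hrpos : 0 < r)
    (τ0 : ℝ) (hτ0 : τ0 = (r + (d1 + d2) * xn - A0) / (r * (d1 * xn - A0 - B0)))
    (G : ℝ → ℂ → ℂ)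
    (hG : G = fun (τ : ℝ) (lam : ℂ) =>
      lam^2 - ((((A0 - (d1 + d2) * xn : ℝ)) : ℂ)
          - (r : ℂ) * Complex.exp (-lam * (τ : ℂ))) * lam
        + (((d2 * xn * (d1 * xn - A0) : ℝ)) : ℂ)
        + (r : ℂ) * Complex.exp (-lam * (τ : ℂ))
          * (((d1 * xn - A0 - B0 : ℝ)) : ℂ)) :
    ∀ τ : ℝ, 0 ≤ τ →
      G τ 0 = 0 ∧
      deriv (G τ) 0
        = ((((r + (d1 + d2) * xn - A0) - r * τ * (d1 * xn - A0 - B0) : ℝ)) : ℂ) ∧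
      (deriv (G τ) 0 ≠ 0 ↔ τ ≠ τ0) := by
  intro τ _
  obtain ⟨hq, hturing⟩ := ne_zero_and_add_mul_eq_zero_of_eq_neg_div hr hrpos.ne'
  have hGτ : G τ = delayedCharFun (A0 - (d1 + d2) * xn : ℝ) (d2 * xn * (d1 * xn - A0) : ℝ) r
      (d1 * xn - A0 - B0 : ℝ) τ := by
    subst hG; rfl
  have hderiv : deriv (G τ) 0
      = ((((r + (d1 + d2) * xn - A0) - r * τ * (d1 * xn - A0 - B0) : ℝ)) : ℂ) := by
    rw [hGτ, (hasDerivAt_delayedCharFun_zero _ _ _ _ _).deriv]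
    push_cast
    ring
  refine ⟨?_, hderiv, ?_⟩
  · rw [hGτ, delayedCharFun_zero]
    exact_mod_cast hturing
  · rw [hderiv, ne_eq, ofReal_eq_zero, ← ne_eq, hτ0]
    exact sub_mul_ne_zero_iff_ne_div (mul_ne_zero hrpos.ne' hq)

/-- If `d1, d2, l > 0`, `A0 + B0 < 0` and `r = r_n^T > 0`, then for
every `τ ≥ 0`, `λ = 0` is a root of `G_n(·, r, τ)`, the derivative in `λ`
satisfies `∂G_n/∂λ(0, r, τ) = [r + (d1+d2)x_n − A0] − r τ (d1 x_n − A0 − B0)`,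
and, with `τ0 = [r + (d1+d2)x_n − A0]/[r (d1 x_n − A0 − B0)]`, the root `λ = 0`
is simple iff `τ ≠ τ0`. -/
theorem holling_tanner_zero_root_simple_iff
    (d1 d2 l A0 B0 r : ℝ) (n : ℕ) (hd1 : 0 < d1) (hd2 : 0 < d2) (hl : 0 < l)
    (hAB : A0 + B0 < 0)
    (xn : ℝ) (hxn : xn = (n:ℝ)^2 / l^2)
    (hr : r = -(d2 * xn * (d1 * xn - A0)) / (d1 * xn - A0 - B0)) (hrpos : 0 < r)
    (τ0 : ℝ) (hτ0 : τ0 = (r + (d1 + d2) * xn - A0) / (r * (d1 * xn - A0 - B0)))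
    (G : ℝ → ℂ → ℂ)
    (hG : G = fun (τ : ℝ) (lam : ℂ) =>
      lam^2 - ((((A0 - (d1 + d2) * xn : ℝ)) : ℂ)
          - (r : ℂ) * Complex.exp (-lam * (τ : ℂ))) * lam
        + (((d2 * xn * (d1 * xn - A0) : ℝ)) : ℂ)
        + (r : ℂ) * Complex.exp (-lam * (τ : ℂ))
          * (((d1 * xn - A0 - B0 : ℝ)) : ℂ)) :
    ∀ τ : ℝ, 0 ≤ τ →
      G τ 0 = 0 ∧
      deriv (G τ) 0
        = ((((r + (d1 + d2) * xn - A0) - r * τ * (d1 * xn - A0 - B0) : ℝ)) : ℂ) ∧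
      (deriv (G τ) 0 ≠ 0 ↔ τ ≠ τ0) :=
  holling_tanner_zero_root_simple_iff_general d1 d2 A0 B0 r xn hr hrpos τ0 hτ0 G hG
end

section
/- Suppose d1, d2 > 0 and A0, B0 ∈ ℝ with A0 > 0 and A0 + B0 < 0, and suppose Δ := (d1 + d2)^2*A0^2 + 4*d1*d2*A0*B0 > 0. Define r^T(x) = −d2*x*(d1*x − A0)/(d1*x − A0 − B0) for x > 0, and x_± = [(d2 − d1)*A0 ± sqrt(Δ)]/(2*d1*d2). Then for every x > 0, r^T(x) > A0 if and only if x_− < x < x_+. -/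
/-!
Since `A0 + B0 < 0`, the denominator `d1 x - A0 - B0` is positive for `x > 0`, so clearing it turns
`r^T(x) > A0` into the quadratic inequality `d1 d2 x² + (d1 - d2) A0 x - A0 (A0 + B0) < 0`,
whose discriminant is `Δ` and whose roots are `x_±`. Completing the square, a quadratic with
positive leading coefficient is negative exactly strictly between its roots.
-/

theorem four_mul_quadratic_eq_sq_sub_discrim {R : Type*} [CommRing R] (a b c x : R) :
    4 * a * (a * (x * x) + b * x + c) = (2 * a * x + b) ^ 2 - discrim a b c := by
  rw [discrim]
  ring

/-- No sign condition on the discriminant is needed: if it is negative, `√` returns `0` and both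
sides are false. -/
theorem quadratic_neg_iff_between_roots {a b c : ℝ} (ha : 0 < a) (x : ℝ) :
    a * (x * x) + b * x + c < 0 ↔
      (-b - √(discrim a b c)) / (2 * a) < x ∧ x < (-b + √(discrim a b c)) / (2 * a) := by
  have h2a : 0 < 2 * a := by positivity
  have hsq : a * (x * x) + b * x + c < 0 ↔ |2 * a * x + b| < √(discrim a b c) := by
    rw [Real.lt_sqrt (abs_nonneg _), sq_abs, ← sub_neg (a := (2 * a * x + b) ^ 2),
      ← four_mul_quadratic_eq_sq_sub_discrim]
    exact (smul_neg_iff_of_pos_left (by positivity : (0 : ℝ) < 4 * a)).symm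
  rw [hsq, abs_lt, div_lt_iff₀ h2a, lt_div_iff₀ h2a]
  constructor <;> rintro ⟨h₁, h₂⟩ <;> constructor <;> linarith

theorem holling_tanner_turing_exceeds_hopf_iff_general
    (d1 d2 A0 B0 : ℝ) (hd1 : 0 < d1) (hd2 : 0 < d2)
    (hAB : A0 + B0 < 0)
    (Δ : ℝ) (hΔdef : Δ = (d1 + d2)^2 * A0^2 + 4*d1*d2*A0*B0)
    (xm xp : ℝ)
    (hxm : xm = ((d2 - d1)*A0 - Real.sqrt Δ) / (2*d1*d2))
    (hxp : xp = ((d2 - d1)*A0 + Real.sqrt Δ) / (2*d1*d2)) :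
    ∀ x : ℝ, 0 < x →
      (A0 < -(d2 * x * (d1 * x - A0)) / (d1 * x - A0 - B0) ↔ xm < x ∧ x < xp) := by
  intro x hx
  have hden : 0 < d1 * x - A0 - B0 := by linarith [mul_pos hd1 hx]
  have hdisc : discrim (d1 * d2) ((d1 - d2) * A0) (-(A0 * (A0 + B0))) = Δ := by
    rw [hΔdef, discrim]
    ring
  calc A0 < -(d2 * x * (d1 * x - A0)) / (d1 * x - A0 - B0)
      ↔ d1 * d2 * (x * x) + (d1 - d2) * A0 * x + -(A0 * (A0 + B0)) < 0 := by
        rw [lt_div_iff₀ hden]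
        constructor <;> intro h <;> linarith
    _ ↔ xm < x ∧ x < xp := by
        rw [quadratic_neg_iff_between_roots (mul_pos hd1 hd2), hdisc, hxm, hxp]
        ring_nf

/-- For `d1, d2 > 0`, `A0 > 0`, `A0 + B0 < 0`, and
`Δ = (d1+d2)² A0² + 4 d1 d2 A0 B0 > 0`, with
`r^T(x) = −d2 x (d1 x − A0)/(d1 x − A0 − B0)` and
`x_± = [(d2 − d1) A0 ± √Δ]/(2 d1 d2)`: for every `x > 0`,
`r^T(x) > A0` iff `x_− < x < x_+`. -/
theorem holling_tanner_turing_exceeds_hopf_iff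
    (d1 d2 A0 B0 : ℝ) (hd1 : 0 < d1) (hd2 : 0 < d2)
    (hA0 : 0 < A0) (hAB : A0 + B0 < 0)
    (Δ : ℝ) (hΔdef : Δ = (d1 + d2)^2 * A0^2 + 4*d1*d2*A0*B0) (hΔ : 0 < Δ)
    (xm xp : ℝ)
    (hxm : xm = ((d2 - d1)*A0 - Real.sqrt Δ) / (2*d1*d2))
    (hxp : xp = ((d2 - d1)*A0 + Real.sqrt Δ) / (2*d1*d2)) :
    ∀ x : ℝ, 0 < x →
      (A0 < -(d2 * x * (d1 * x - A0)) / (d1 * x - A0 - B0) ↔ xm < x ∧ x < xp) :=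
  holling_tanner_turing_exceeds_hopf_iff_general d1 d2 A0 B0 hd1 hd2 hAB Δ hΔdef xm xp hxm hxp
end

section
/- Let a, b, d1, d2, r, l > 0 and let (u, v) be a positive steady state of the diffusive Holling–Tanner system on (0, lπ). Then u(x) ≤ 1 and v(x) ≤ 1 for every x ∈ [0, lπ], and moreover the maximum of v over [0, lπ] is at least b/(a + b). -/
/-
Maximum principle with Neumann conditions: at a maximum of a `C²` function on `[0, lπ]`,
interior or at an endpoint where the derivative vanishes, the second derivative is
nonpositive. Evaluating the two equations at the extrema of `u` and `v` gives `max u ≤ 1`,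
`max v ≤ max u`, `min u ≤ min v` and `(1 - min u)(min u + b) ≤ a max v`. As
`(1 - m)(m + b) ≥ (1 - m) b ≥ (1 - max v) b` for `m = min u ≤ 1`, this yields
`(a + b) max v ≥ b`.
-/

/-- A positive steady state of the diffusive Holling–Tanner system on `(0, lπ)`:
twice continuously differentiable positive functions `u, v` on `[0, lπ]` solving
`d1 u'' + u(1−u) − a u v/(u+b) = 0`, `d2 v'' + r v(1 − v/u) = 0` with Neumann
boundary conditions. -/
def IsPositiveSteadyState (a b d1 d2 r l : ℝ) (u v : ℝ → ℝ) : Prop :=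
  ContDiff ℝ 2 u ∧ ContDiff ℝ 2 v ∧
  (∀ x ∈ Set.Icc 0 (l * Real.pi), 0 < u x) ∧
  (∀ x ∈ Set.Icc 0 (l * Real.pi), 0 < v x) ∧
  (∀ x ∈ Set.Icc 0 (l * Real.pi),
    d1 * deriv (deriv u) x + u x * (1 - u x) - a * u x * v x / (u x + b) = 0) ∧
  (∀ x ∈ Set.Icc 0 (l * Real.pi),
    d2 * deriv (deriv v) x + r * v x * (1 - v x / u x) = 0) ∧
  deriv u 0 = 0 ∧ deriv u (l * Real.pi) = 0 ∧
  deriv v 0 = 0 ∧ deriv v (l * Real.pi) = 0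

open Set Topology

theorem eventually_lt_of_deriv_pos_nhdsGT {f : ℝ → ℝ} {x₀ : ℝ} (hf : Differentiable ℝ f)
    (h : ∀ᶠ y in 𝓝[>] x₀, 0 < deriv f y) : ∀ᶠ y in 𝓝[>] x₀, f x₀ < f y := by
  obtain ⟨c, hc, hsub⟩ := mem_nhdsGT_iff_exists_Ioo_subset.mp h
  filter_upwards [Ioo_mem_nhdsGT hc] with y hy
  refine strictMonoOn_of_deriv_pos (convex_Icc x₀ y) hf.continuous.continuousOn (fun z hz => ?_)
    (left_mem_Icc.2 hy.1.le) (right_mem_Icc.2 hy.1.le) hy.1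
  rw [interior_Icc] at hz
  exact hsub ⟨hz.1, hz.2.trans hy.2⟩

theorem eventually_lt_of_deriv_neg_nhdsLT {f : ℝ → ℝ} {x₀ : ℝ} (hf : Differentiable ℝ f)
    (h : ∀ᶠ y in 𝓝[<] x₀, deriv f y < 0) : ∀ᶠ y in 𝓝[<] x₀, f x₀ < f y := by
  obtain ⟨c, hc, hsub⟩ := mem_nhdsLT_iff_exists_Ioo_subset.mp h
  filter_upwards [Ioo_mem_nhdsLT hc] with y hy
  refine strictAntiOn_of_deriv_neg (convex_Icc y x₀) hf.continuous.continuousOn (fun z hz => ?_)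
    (left_mem_Icc.2 hy.2.le) (right_mem_Icc.2 hy.2.le) hy.2
  rw [interior_Icc] at hz
  exact hsub ⟨hy.1.trans hz.1, hz.2⟩

theorem IsExtrOn.deriv_eq_zero_of_neumann {f : ℝ → ℝ} {a b x₀ : ℝ}
    (hext : IsExtrOn f (Icc a b) x₀) (hx₀ : x₀ ∈ Icc a b)
    (ha : deriv f a = 0) (hb : deriv f b = 0) : deriv f x₀ = 0 := by
  rcases hx₀.1.eq_or_lt with rfl | hax
  · exact ha
  rcases hx₀.2.eq_or_lt with rfl | hxb
  · exact hb
  exact (hext.isLocalExtr (Icc_mem_nhds hax hxb)).deriv_eq_zero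

theorem IsMaxOn.deriv_deriv_nonpos_of_neumann {f : ℝ → ℝ} {a b x₀ : ℝ}
    (hmax : IsMaxOn f (Icc a b) x₀) (hab : a < b) (hf : Differentiable ℝ f)
    (hx₀ : x₀ ∈ Icc a b) (ha : deriv f a = 0) (hb : deriv f b = 0) :
    deriv (deriv f) x₀ ≤ 0 := by
  by_contra! hpos
  have hsign : ∀ᶠ y in 𝓝[≠] x₀, SignType.sign (deriv f y) = SignType.sign (y - x₀) :=
    nhdsWithin_le_nhds <| eventually_nhdsWithin_sign_eq_of_deriv_pos hpos <|
      hmax.isExtr.deriv_eq_zero_of_neumann hx₀ ha hb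
  rcases hx₀.2.lt_or_eq with hxb | rfl
  · obtain ⟨y, hlt, hy⟩ := ((eventually_lt_of_deriv_pos_nhdsGT hf
      (deriv_pos_right_of_sign_deriv hsign)).and (Icc_mem_nhdsGT_of_mem ⟨hx₀.1, hxb⟩)).exists
    exact (hmax hy).not_gt hlt
  · obtain ⟨y, hlt, hy⟩ := ((eventually_lt_of_deriv_neg_nhdsLT hf
      (deriv_neg_left_of_sign_deriv hsign)).and (Icc_mem_nhdsLT hab)).exists
    exact (hmax hy).not_gt hlt

theorem IsMinOn.deriv_deriv_nonneg_of_neumann {f : ℝ → ℝ} {a b x₀ : ℝ}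
    (hmin : IsMinOn f (Icc a b) x₀) (hab : a < b) (hf : Differentiable ℝ f)
    (hx₀ : x₀ ∈ Icc a b) (ha : deriv f a = 0) (hb : deriv f b = 0) :
    0 ≤ deriv (deriv f) x₀ := by
  have hneg : deriv (fun x => -f x) = fun x => -deriv f x := funext fun _ => deriv.fun_neg
  have := hmin.neg.deriv_deriv_nonpos_of_neumann hab hf.neg hx₀
    (by rw [deriv.fun_neg, ha, neg_zero]) (by rw [deriv.fun_neg, hb, neg_zero])
  rwa [hneg, deriv.fun_neg, neg_nonpos] at this

namespace HollingTanner

variable {d w a b r u v : ℝ}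

theorem prey_le_one (hd : 0 ≤ d) (hw : w ≤ 0) (ha : 0 ≤ a) (hb : 0 ≤ b) (hu : 0 < u)
    (hv : 0 ≤ v) (h : d * w + u * (1 - u) - a * u * v / (u + b) = 0) : u ≤ 1 := by
  have hdw : d * w ≤ 0 := mul_nonpos_of_nonneg_of_nonpos hd hw
  have hpred : 0 ≤ a * u * v / (u + b) := by positivity
  have : 0 ≤ u * (1 - u) := by linarith
  linarith [(mul_nonneg_iff_of_pos_left hu).mp this]

theorem one_sub_prey_mul_le (hd : 0 ≤ d) (hw : 0 ≤ w) (hb : 0 ≤ b) (hu : 0 < u)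
    (h : d * w + u * (1 - u) - a * u * v / (u + b) = 0) : (1 - u) * (u + b) ≤ a * v := by
  have hub : 0 < u + b := by positivity
  have : u * (1 - u) ≤ a * u * v / (u + b) := by nlinarith [mul_nonneg hd hw]
  rw [le_div_iff₀ hub] at this
  exact le_of_mul_le_mul_left (by linarith) hu

theorem predator_le_prey (hd : 0 ≤ d) (hw : w ≤ 0) (hr : 0 < r) (hu : 0 < u) (hv : 0 < v)
    (h : d * w + r * v * (1 - v / u) = 0) : v ≤ u := by
  have : 0 ≤ r * v * (1 - v / u) := by nlinarith [mul_nonpos_of_nonneg_of_nonpos hd hw]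
  rw [← div_le_one hu]
  linarith [(mul_nonneg_iff_of_pos_left (mul_pos hr hv)).mp this]

theorem prey_le_predator (hd : 0 ≤ d) (hw : 0 ≤ w) (hr : 0 < r) (hu : 0 < u) (hv : 0 < v)
    (h : d * w + r * v * (1 - v / u) = 0) : u ≤ v := by
  have : r * v * (1 - v / u) ≤ 0 := by nlinarith [mul_nonneg hd hw]
  rw [← one_le_div hu]
  linarith [(mul_nonpos_iff_pos_imp_nonpos.mp this).1 (mul_pos hr hv)]

theorem div_add_le_of_one_sub_mul_le {m V : ℝ} (ha : 0 < a) (hb : 0 ≤ b) (hm₀ : 0 ≤ m)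
    (hm₁ : m ≤ 1) (hmV : m ≤ V) (h : (1 - m) * (m + b) ≤ a * V) : b / (a + b) ≤ V := by
  rw [div_le_iff₀ (by positivity)]
  calc b = (1 - V) * b + V * b := by ring
    _ ≤ (1 - m) * (m + b) + V * b := by nlinarith
    _ ≤ V * (a + b) := by linarith

end HollingTanner

/-- For `a, b, d1, d2, r, l > 0`, every positive steady state `(u, v)`
satisfies `u(x) ≤ 1` and `v(x) ≤ 1` on `[0, lπ]`, and the maximum of `v` over
`[0, lπ]` is at least `b/(a + b)`. -/
theorem holling_tanner_upper_bound
    (a b d1 d2 r l : ℝ) (ha : 0 < a) (hb : 0 < b) (hd1 : 0 < d1) (hd2 : 0 < d2)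
    (hr : 0 < r) (hl : 0 < l) (u v : ℝ → ℝ)
    (hss : IsPositiveSteadyState a b d1 d2 r l u v) :
    (∀ x ∈ Set.Icc 0 (l * Real.pi), u x ≤ 1 ∧ v x ≤ 1) ∧
    (∃ x ∈ Set.Icc 0 (l * Real.pi), b / (a + b) ≤ v x) := by
  obtain ⟨hu, hv, hu_pos, hv_pos, hu_eq, hv_eq, hu0, huL, hv0, hvL⟩ := hss
  have hL : 0 < l * Real.pi := mul_pos hl Real.pi_pos
  have hne : (Icc 0 (l * Real.pi)).Nonempty := nonempty_Icc.2 hL.le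
  have hud : Differentiable ℝ u := hu.differentiable two_ne_zero
  have hvd : Differentiable ℝ v := hv.differentiable two_ne_zero
  obtain ⟨xu, hxu, hmaxu⟩ := isCompact_Icc.exists_isMaxOn hne hu.continuous.continuousOn
  obtain ⟨xv, hxv, hmaxv⟩ := isCompact_Icc.exists_isMaxOn hne hv.continuous.continuousOn
  obtain ⟨yu, hyu, hminu⟩ := isCompact_Icc.exists_isMinOn hne hu.continuous.continuousOn
  obtain ⟨yv, hyv, hminv⟩ := isCompact_Icc.exists_isMinOn hne hv.continuous.continuousOn
  have hmax_u : u xu ≤ 1 := HollingTanner.prey_le_one hd1.le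
    (hmaxu.deriv_deriv_nonpos_of_neumann hL hud hxu hu0 huL) ha.le hb.le (hu_pos xu hxu)
    (hv_pos xu hxu).le (hu_eq xu hxu)
  have hmax_v : v xv ≤ u xv := HollingTanner.predator_le_prey hd2.le
    (hmaxv.deriv_deriv_nonpos_of_neumann hL hvd hxv hv0 hvL) hr (hu_pos xv hxv) (hv_pos xv hxv)
    (hv_eq xv hxv)
  have hmin_v : u yv ≤ v yv := HollingTanner.prey_le_predator hd2.le
    (hminv.deriv_deriv_nonneg_of_neumann hL hvd hyv hv0 hvL) hr (hu_pos yv hyv) (hv_pos yv hyv)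
    (hv_eq yv hyv)
  have hmin_u : (1 - u yu) * (u yu + b) ≤ a * v yu := HollingTanner.one_sub_prey_mul_le hd1.le
    (hminu.deriv_deriv_nonneg_of_neumann hL hud hyu hu0 huL) hb.le (hu_pos yu hyu) (hu_eq yu hyu)
  have hu_le : ∀ x ∈ Icc 0 (l * Real.pi), u x ≤ 1 := fun x hx => (hmaxu hx).trans hmax_u
  refine ⟨fun x hx => ⟨hu_le x hx, (hmaxv hx).trans (hmax_v.trans (hu_le xv hxv))⟩, xv, hxv, ?_⟩
  exact HollingTanner.div_add_le_of_one_sub_mul_le ha hb.le (hu_pos yu hyu).le (hu_le yu hyu)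
    (((hminu hyv).trans hmin_v).trans (hmaxv hyv))
    (hmin_u.trans (mul_le_mul_of_nonneg_left (hmaxv hyu) ha.le))
end
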